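/- For every ξ ∈ ℝ²∖{0}, the matrices s(ξ) := (1/(2μ|ξ|))·(m·D(ξ) − I₃) and r(ξ) := 2μ|ξ|·(−((λ+μ)/(λ+3μ))·D(ξ) − I₃) satisfy s(ξ)·r(ξ) = I₃. (The principal symbol of the inverse of the elastic single layer potential is r(ξ).) -/

import Mathlib

/-!
`D(ξ)` is idempotent, and for an idempotent `P` one has
`(a • P - 1) * (b • P - 1) = (a * b - a - b) • P + 1`. The coefficients `a = m` and
`b = -(λ + μ)/(λ + 3μ)` satisfy `a * b = a + b`, while the scalar prefactors `1/(2μ|ξ|)` and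
`2μ|ξ|` cancel.
-/

/-- The block-diagonal matrix `D(ξ) = diag(Λ(ξ), 1)`, `Λ(ξ)_{ij} = ξ_i ξ_j / |ξ|²`. -/
noncomputable def dMat (ξ : Fin 2 → ℝ) : Matrix (Fin 3) (Fin 3) ℝ :=
  Matrix.of fun p q =>
    (![ξ 0, ξ 1, 0] p * ![ξ 0, ξ 1, 0] q) / (ξ 0 ^ 2 + ξ 1 ^ 2) +
      (if p = 2 ∧ q = 2 then 1 else 0)

theorem IsIdempotentElem.smul_sub_one_mul_smul_sub_one {R A : Type*} [CommRing R] [Ring A]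
    [Algebra R A] {p : A} (hp : IsIdempotentElem p) {a b : R} (hab : a * b = a + b) :
    (a • p - 1) * (b • p - 1) = 1 := by
  rw [sub_mul, mul_sub, mul_sub, smul_mul_smul_comm, hp.eq, hab, add_smul]
  simp

theorem dMat_isIdempotentElem (ξ : Fin 2 → ℝ) : IsIdempotentElem (dMat ξ) := by
  unfold IsIdempotentElem
  rcases eq_or_ne (ξ 0 ^ 2 + ξ 1 ^ 2) 0 with hs | hs <;>
  · ext i j
    fin_cases i <;> fin_cases j <;>
      simp [dMat, Matrix.mul_apply, Fin.sum_univ_three, hs] <;> field_simp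

theorem sq_add_sq_ne_zero_of_ne_zero {ξ : Fin 2 → ℝ} (hξ : ξ ≠ 0) : ξ 0 ^ 2 + ξ 1 ^ 2 ≠ 0 := by
  intro hs
  obtain ⟨h0, h1⟩ := (add_eq_zero_iff_of_nonneg (sq_nonneg _) (sq_nonneg _)).mp hs
  apply hξ
  ext i
  fin_cases i
  · exact pow_eq_zero_iff two_ne_zero |>.mp h0
  · exact pow_eq_zero_iff two_ne_zero |>.mp h1

theorem lame_coeff_mul_eq_add {lam mu : ℝ} (h2 : lam + 2 * mu ≠ 0) (h3 : lam + 3 * mu ≠ 0) :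
    (lam + mu) / (2 * (lam + 2 * mu)) * -((lam + mu) / (lam + 3 * mu)) =
      (lam + mu) / (2 * (lam + 2 * mu)) + -((lam + mu) / (lam + 3 * mu)) := by
  rw [← sub_eq_add_neg, div_sub_div _ _ (mul_ne_zero two_ne_zero h2) h3]
  field_simp
  ring

/-- The principal symbol `r(ξ)` of the inverse of the elastic single layer potential is
the inverse of its principal symbol `s(ξ)`: `s(ξ)·r(ξ) = I₃`. -/
theorem single_layer_inverse_symbol
    (lam mu : ℝ) (hmu : 0 < mu) (hlam2mu : 0 < lam + 2 * mu)
    (ξ : Fin 2 → ℝ) (hξ : ξ ≠ 0) :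
    ((1 / (2 * mu * Real.sqrt (ξ 0 ^ 2 + ξ 1 ^ 2))) •
        (((lam + mu) / (2 * (lam + 2 * mu))) • dMat ξ - 1)) *
      ((2 * mu * Real.sqrt (ξ 0 ^ 2 + ξ 1 ^ 2)) •
        (-((lam + mu) / (lam + 3 * mu)) • dMat ξ - 1)) = 1 := by
  have hscale : 2 * mu * Real.sqrt (ξ 0 ^ 2 + ξ 1 ^ 2) ≠ 0 := by
    have hs := (sq_add_sq_ne_zero_of_ne_zero hξ).symm.lt_of_le (by positivity)
    positivity
  rw [smul_mul_smul_comm, one_div_mul_cancel hscale, one_smul]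
  exact (dMat_isIdempotentElem ξ).smul_sub_one_mul_smul_sub_one
    (lame_coeff_mul_eq_add hlam2mu.ne' (by linarith))
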